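/- arXiv:2502.20257 — 9 statements merged into one kernel-verified Lean document; each statement's English description precedes it below -/
import Mathlib

section
/- Let A ∈ M_m(ℂ) and B ∈ M_n(ℂ) be nonzero matrices such that the Kronecker product A ⊗ B is unitary. Then there exists a real scalar δ > 0 such that δ·A and δ⁻¹·B are both unitary. -/
/-!
Since `(A ⊗ B)ᴴ (A ⊗ B) = AᴴA ⊗ BᴴB = 1`, comparing entries forces `AᴴA = c • 1` and
`BᴴB = c⁻¹ • 1` for some scalar `c`. As a diagonal entry of the positive semidefinite `AᴴA`, `c` is
a positive real, and `δ = c ^ (-1/2)` rescales both factors to unitaries.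
-/

open Kronecker Matrix

namespace Matrix

theorem nonempty_of_ne_zero {m n α : Type*} [Zero α] {M : Matrix m n α} (hM : M ≠ 0) :
    Nonempty m :=
  not_isEmpty_iff.mp fun _ ↦ hM (Subsingleton.elim _ _)

variable {m n : Type*} [DecidableEq m] [DecidableEq n]

theorem exists_eq_smul_one_of_kronecker_eq_one {K : Type*} [Field K] [Nonempty m] [Nonempty n]
    {P : Matrix m m K} {Q : Matrix n n K} (h : P ⊗ₖ Q = 1) :
    ∃ c : K, c ≠ 0 ∧ P = c • 1 ∧ Q = c⁻¹ • 1 := by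
  have entry (i i' j j') : P i i' * Q j j' = if i = i' ∧ j = j' then 1 else 0 := by
    simpa [one_apply, Prod.ext_iff] using congrFun (congrFun h (i, j)) (i', j')
  obtain ⟨i₀⟩ := ‹Nonempty m›
  obtain ⟨j₀⟩ := ‹Nonempty n›
  have hdiag : P i₀ i₀ * Q j₀ j₀ = 1 := by simpa using entry i₀ i₀ j₀ j₀
  have hP₀ : P i₀ i₀ ≠ 0 := left_ne_zero_of_mul_eq_one hdiag
  have hQ₀ : Q j₀ j₀ = (P i₀ i₀)⁻¹ := eq_inv_of_mul_eq_one_right hdiag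
  refine ⟨P i₀ i₀, hP₀, ?_, ?_⟩
  · ext i i'
    rw [(eq_mul_inv_iff_mul_eq₀ (hQ₀ ▸ inv_ne_zero hP₀)).mpr (entry i i' j₀ j₀), hQ₀, inv_inv]
    simp [one_apply]
  · ext j j'
    rw [(eq_inv_mul_iff_mul_eq₀ hP₀).mpr (entry i₀ i₀ j j')]
    simp [one_apply]

theorem smul_mem_unitaryGroup_of_star_mul_self_eq_smul_one {R : Type*} [CommRing R] [StarRing R]
    [Fintype n] {A : Matrix n n R} {c δ : R} (hA : star A * A = c • 1) (hδ : star δ * δ * c = 1) :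
    δ • A ∈ unitaryGroup n R := by
  rw [mem_unitaryGroup_iff', star_smul, smul_mul, Matrix.mul_smul, hA, smul_smul, smul_smul, hδ,
    one_smul]

open ComplexOrder in
theorem pos_of_conjTranspose_mul_self_eq_smul_one {𝕜 : Type*} [RCLike 𝕜] [Fintype n] [Nonempty n]
    {A : Matrix n n 𝕜} {c : 𝕜} (hA : Aᴴ * A = c • 1) (hc : c ≠ 0) : 0 < c := by
  obtain ⟨i⟩ := ‹Nonempty n›
  have : 0 ≤ (Aᴴ * A) i i := (posSemidef_conjTranspose_mul_self A).diag_nonneg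
  simp only [hA, smul_apply, one_apply_eq, smul_eq_mul, mul_one] at this
  exact this.lt_of_ne' hc

end Matrix

/-- If the Kronecker product of two nonzero complex matrices is unitary, then both
factors are unitary up to a positive real scalar. -/
theorem kronecker_unitary_factors {m n : ℕ}
    (A : Matrix (Fin m) (Fin m) ℂ) (B : Matrix (Fin n) (Fin n) ℂ)
    (hA : A ≠ 0) (hB : B ≠ 0)
    (hU : A ⊗ₖ B ∈ Matrix.unitaryGroup (Fin m × Fin n) ℂ) :
    ∃ δ : ℝ, 0 < δ ∧ (δ : ℂ) • A ∈ Matrix.unitaryGroup (Fin m) ℂ ∧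
      ((δ : ℂ))⁻¹ • B ∈ Matrix.unitaryGroup (Fin n) ℂ := by
  have : Nonempty (Fin m) := nonempty_of_ne_zero hA
  have : Nonempty (Fin n) := nonempty_of_ne_zero hB
  have hPQ : (Aᴴ * A) ⊗ₖ (Bᴴ * B) = 1 := by
    rw [mul_kronecker_mul, ← conjTranspose_kronecker]
    exact mem_unitaryGroup_iff'.mp hU
  obtain ⟨c, hc, hP, hQ⟩ := exists_eq_smul_one_of_kronecker_eq_one hPQ
  obtain ⟨r, hr, rfl⟩ :=
    RCLike.pos_iff_exists_ofReal.mp (pos_of_conjTranspose_mul_self_eq_smul_one hP hc)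
  have hsq : √r * √r = r := Real.mul_self_sqrt hr.le
  refine ⟨(√r)⁻¹, by positivity, smul_mem_unitaryGroup_of_star_mul_self_eq_smul_one hP ?_,
    smul_mem_unitaryGroup_of_star_mul_self_eq_smul_one hQ ?_⟩
  · have : (√r)⁻¹ * (√r)⁻¹ * r = 1 := by rw [← mul_inv, hsq, inv_mul_cancel₀ hr.ne']
    simpa [Complex.conj_ofReal] using congrArg Complex.ofReal this
  · have : √r * √r * r⁻¹ = 1 := by rw [hsq, mul_inv_cancel₀ hr.ne']
    simpa [Complex.conj_ofReal] using congrArg Complex.ofReal this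
end

section
/- Let T be a unitary matrix over ℂ and σ ∈ ℂ a scalar such that T · T* = σ·I, where T* denotes the entrywise complex conjugate of T. Then σ = 1 or σ = −1. -/
/-!
Unitarity of `T` makes `T*` the inverse of `Tᵀ`, so `T T* = σ` says `T = σ Tᵀ`.
Transposing gives `Tᵀ = σ T`, hence `T = σ² T`, and `σ² = 1` since `T ≠ 0`.
-/

open Matrix

namespace Matrix

variable {n R : Type*}

theorem map_star_mul_transpose_eq_one [Fintype n] [DecidableEq n] [CommRing R] [StarRing R]
    {U : Matrix n n R} (hU : U ∈ unitaryGroup n R) : U.map star * Uᵀ = 1 := by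
  have hstar : star (U.map star) = Uᵀ := by ext; simp
  simpa [hstar] using mem_unitaryGroup_iff.mp (map_star_mem_unitaryGroup_iff.mpr hU)

theorem eq_smul_transpose_of_mul_map_star_eq_smul_one [Fintype n] [DecidableEq n] [CommRing R]
    [StarRing R] {U : Matrix n n R} (hU : U ∈ unitaryGroup n R) {σ : R}
    (h : U * U.map star = σ • 1) : U = σ • Uᵀ :=
  calc U = U * (U.map star * Uᵀ) := by rw [map_star_mul_transpose_eq_one hU, mul_one]
    _ = σ • Uᵀ := by rw [← mul_assoc, h, smul_one_mul]

theorem ne_zero_of_mem_unitaryGroup [Fintype n] [DecidableEq n] [Nonempty n] [CommRing R]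
    [Nontrivial R] [StarRing R] {U : Matrix n n R} (hU : U ∈ unitaryGroup n R) : U ≠ 0 := by
  rintro rfl
  simpa using mem_unitaryGroup_iff.mp hU

theorem eq_one_or_eq_neg_one_of_eq_smul_transpose [CommRing R] [IsDomain R]
    {A : Matrix n n R} (hA : A ≠ 0) {σ : R} (h : A = σ • Aᵀ) : σ = 1 ∨ σ = -1 := by
  have hAt : Aᵀ = σ • A := by simpa using congrArg transpose h
  have hσσ : (σ * σ - 1) • A = 0 := by
    rw [sub_smul, one_smul, mul_smul, ← hAt, ← h, sub_self]
  -- `Matrix` has no torsion-freeness instance, but the underlying function type does.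
  have hσ : σ * σ - 1 = 0 := ((smul_eq_zero (M := n → n → R)).mp hσσ).resolve_right hA
  exact mul_self_eq_one_iff.mp (sub_eq_zero.mp hσ)

end Matrix

/-- If `T` is unitary and `T · T* = σ·I` (with `T*` the entrywise complex conjugate),
then `σ = 1` or `σ = −1`. -/
theorem time_reversal_index_is_sign {n : ℕ} (hn : 0 < n)
    (T : Matrix (Fin n) (Fin n) ℂ) (σ : ℂ)
    (hT : T ∈ Matrix.unitaryGroup (Fin n) ℂ)
    (h : T * T.map (starRingEnd ℂ) = σ • (1 : Matrix (Fin n) (Fin n) ℂ)) :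
    σ = 1 ∨ σ = -1 := by
  have : NeZero n := ⟨hn.ne'⟩
  exact eq_one_or_eq_neg_one_of_eq_smul_transpose (ne_zero_of_mem_unitaryGroup hT)
    (eq_smul_transpose_of_mul_map_star_eq_smul_one hT h)
end

section
/- Let G be a finite group acting on a set X, and let Ω : G × G × X → ℂˣ satisfy the generalized 2-cocycle condition Ω(g,h,kx)·Ω(gh,k,x) = Ω(g,hk,x)·Ω(h,k,x) for all g,h,k ∈ G and x ∈ X. Then Ω^{|G|} is a coboundary: there exists χ : G × X → ℂˣ such that Ω(g,h,x)^{|G|} = χ(g,hx)·χ(h,x)·χ(gh,x)⁻¹ for all g,h ∈ G, x ∈ X. (One may take χ(g,x) = det X^x_g, where X^x_g is the linear operator on ℂG defined by X^x_g|h⟩ = Ω(g,h,h⁻¹x)|gh⟩, which satisfies X^{hx}_g ∘ X^x_h = Ω(g,h,x)·X^x_{gh}.) -/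
/-!
The operator `X^x_g` of the paper is monomial: it sends `|k⟩` to a multiple of `|g k⟩`, so its
determinant is `± ∏ₖ Ω(g, k, k⁻¹x)`. The sign is the signature of left translation by `g`, a
homomorphism of `G` whose coboundary is trivial; it can be dropped, and the product
`χ(g, x) = ∏ₖ Ω(g, k, k⁻¹x)` works over any commutative group of coefficients. Multiplying the
cocycle identity at `(g, h, k, k⁻¹x)` over all `k` gives `χ(g, hx) χ(h, x) = Ω(g, h, x)^|G| χ(gh, x)`
after reindexing `k ↦ hk` in the first factor.
-/

open Finset

section

variable {G X M : Type*} [Group G] [MulAction G X] [CommGroup M]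

def IsGeneralizedCocycle (Ω : G → G → X → M) : Prop :=
  ∀ (g h k : G) (x : X), Ω g h (k • x) * Ω (g * h) k x = Ω g (h * k) x * Ω h k x

variable [Fintype G]

def cocycleDet (Ω : G → G → X → M) (g : G) (x : X) : M :=
  ∏ k : G, Ω g k (k⁻¹ • x)

lemma prod_inv_smul_smul_eq_prod_mul_left (f : G → X → M) (h : G) (x : X) :
    ∏ k : G, f k (k⁻¹ • h • x) = ∏ k : G, f (h * k) (k⁻¹ • x) :=
  (Fintype.prod_equiv (Equiv.mulLeft h) _ _ fun k => by simp [mul_smul]).symm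

lemma IsGeneralizedCocycle.cocycleDet_smul_mul {Ω : G → G → X → M}
    (hΩ : IsGeneralizedCocycle Ω) (g h : G) (x : X) :
    cocycleDet Ω g (h • x) * cocycleDet Ω h x =
      Ω g h x ^ Fintype.card G * cocycleDet Ω (g * h) x := by
  unfold cocycleDet
  rw [prod_inv_smul_smul_eq_prod_mul_left, ← prod_mul_distrib, ← card_univ, ← prod_const,
    ← prod_mul_distrib]
  refine prod_congr rfl fun k _ => ?_
  simpa only [smul_inv_smul] using (hΩ g h k (k⁻¹ • x)).symm

end

/-- Determinant trick: the `|G|`-th power of a generalized 2-cocycle on a finite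
group acting on a set is a coboundary. -/
theorem generalized_cocycle_pow_card_is_coboundary
    {G : Type*} [Group G] [Fintype G] {X : Type*} [MulAction G X]
    (Ω : G → G → X → ℂˣ)
    (hΩ : ∀ (g h k : G) (x : X),
      Ω g h (k • x) * Ω (g * h) k x = Ω g (h * k) x * Ω h k x) :
    ∃ χ : G → X → ℂˣ, ∀ (g h : G) (x : X),
      (Ω g h x) ^ (Fintype.card G) = χ g (h • x) * χ h x * (χ (g * h) x)⁻¹ :=
  ⟨cocycleDet Ω, fun g h x => by
    rw [eq_comm, mul_inv_eq_iff_eq_mul, IsGeneralizedCocycle.cocycleDet_smul_mul hΩ]⟩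
end

section
/- Let G be a finite group acting on a set X and Ω : G × G × X → ℝ_{>0} a strictly positive function satisfying the generalized 2-cocycle condition Ω(g,h,kx)·Ω(gh,k,x) = Ω(g,hk,x)·Ω(h,k,x). Then Ω is a coboundary with positive trivializer: there exists χ : G × X → ℝ_{>0} with Ω(g,h,x) = χ(g,hx)·χ(h,x)·χ(gh,x)⁻¹ for all g,h,x. -/
/-! Multiplying the cocycle identity `Ω(k,g,hx) Ω(kg,h,x) = Ω(k,gh,x) Ω(g,h,x)` over all `k ∈ G`
and reindexing `k ↦ kg` shows that `Ω^|G|` is the coboundary of `P(g,x) = ∏ₖ Ω(k,g,x)`.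
Since `t ↦ t^|G|` is a bijection of the positive reals, `χ = P^(1/|G|)` trivializes `Ω` itself. -/

theorem prod_mul_prod_eq_pow_card_mul_prod {G X M : Type*} [Group G] [Fintype G] [SMul G X]
    [CommMonoid M] {Ω : G → G → X → M}
    (hΩ : ∀ (g h k : G) (x : X), Ω g h (k • x) * Ω (g * h) k x = Ω g (h * k) x * Ω h k x)
    (g h : G) (x : X) :
    (∏ k, Ω k g (h • x)) * ∏ k, Ω k h x = Ω g h x ^ Fintype.card G * ∏ k, Ω k (g * h) x := by
  have hreindex : ∏ k, Ω (k * g) h x = ∏ k, Ω k h x :=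
    Fintype.prod_equiv (Equiv.mulRight g) _ _ fun _ => rfl
  rw [← hreindex, ← Finset.prod_mul_distrib, Finset.prod_congr rfl fun k _ => hΩ k g h x,
    Finset.prod_mul_distrib, Finset.prod_const, Finset.card_univ, mul_comm]

theorem Real.eq_rpow_inv_mul_rpow_inv_mul_inv_of_mul_eq_pow_mul {a b c w : ℝ} {n : ℕ}
    (hn : n ≠ 0) (ha : 0 ≤ a) (hb : 0 ≤ b) (hc : 0 < c) (hw : 0 ≤ w) (h : a * b = w ^ n * c) :
    w = a ^ (n⁻¹ : ℝ) * b ^ (n⁻¹ : ℝ) * (c ^ (n⁻¹ : ℝ))⁻¹ := by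
  rw [← Real.inv_rpow hc.le, ← Real.mul_rpow ha hb, ← Real.mul_rpow (mul_nonneg ha hb)
    (inv_nonneg.2 hc.le), h, mul_inv_cancel_right₀ hc.ne', Real.pow_rpow_inv_natCast hw hn]

/-- A strictly positive generalized 2-cocycle on a finite group acting on a set
is a coboundary with a strictly positive trivializer. -/
theorem positive_generalized_cocycle_is_coboundary
    {G : Type*} [Group G] [Fintype G] {X : Type*} [MulAction G X]
    (Ω : G → G → X → ℝ)
    (hpos : ∀ (g h : G) (x : X), 0 < Ω g h x)
    (hΩ : ∀ (g h k : G) (x : X),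
      Ω g h (k • x) * Ω (g * h) k x = Ω g (h * k) x * Ω h k x) :
    ∃ χ : G → X → ℝ, (∀ (g : G) (x : X), 0 < χ g x) ∧
      ∀ (g h : G) (x : X), Ω g h x = χ g (h • x) * χ h x * (χ (g * h) x)⁻¹ := by
  have hP : ∀ g x, 0 < ∏ k, Ω k g x := fun g x => Finset.prod_pos fun k _ => hpos k g x
  refine ⟨fun g x => (∏ k, Ω k g x) ^ ((Fintype.card G)⁻¹ : ℝ),
    fun g x => Real.rpow_pos_of_pos (hP g x) _, fun g h x => ?_⟩
  exact Real.eq_rpow_inv_mul_rpow_inv_mul_inv_of_mul_eq_pow_mul Fintype.card_ne_zero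
    (hP g (h • x)).le (hP h x).le (hP (g * h) x) (hpos g h x).le
    (prod_mul_prod_eq_pow_card_mul_prod hΩ g h x)
end

section
/- Let G be a finite group acting on a set X and Ω : G × G × X → ℝ_{>0} a positive generalized 2-cocycle (Ω(g,h,kx)Ω(gh,k,x) = Ω(g,hk,x)Ω(h,k,x)) which additionally satisfies Ω(g,h,x)·Ω(h⁻¹,g⁻¹,ghx) = 1 for all g,h ∈ G, x ∈ X. Then there exists χ : G × X → ℝ_{>0} with Ω(g,h,x) = χ(g,hx)χ(h,x)/χ(gh,x) and moreover χ(g,x)·χ(g⁻¹,gx) = 1 for all g ∈ G, x ∈ X. -/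
/-!
Passing to `c = log Ω` turns the problem additive. Summing the cocycle identity over the first
group variable shows that `c` is the coboundary of its average `β g x = |G|⁻¹ ∑ₖ c k g x`.
The hat involution commutes with the coboundary, so `ĉ = δβ̂`; as `ĉ = -c`, the antisymmetrised
`b = (β - β̂) / 2` still has `δb = c` and moreover `b̂ = -b`. Then `χ = exp b`.
-/

namespace ActionCochain

variable {G X M : Type*} [Group G] [MulAction G X]

def hat₁ (β : G → X → M) : G → X → M := fun g x => β g⁻¹ (g • x)

def hat₂ (c : G → G → X → M) : G → G → X → M :=
  fun g h x => c h⁻¹ g⁻¹ ((g * h) • x)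

@[simp]
theorem hat₁_hat₁ (β : G → X → M) : hat₁ (hat₁ β) = β := by
  funext g x
  simp [hat₁]

theorem hat₁_smul {R : Type*} [SMul R M] (r : R) (β : G → X → M) :
    hat₁ (r • β) = r • hat₁ β := rfl

variable [AddCommGroup M]

theorem hat₁_sub (β γ : G → X → M) : hat₁ (β - γ) = hat₁ β - hat₁ γ := rfl

def coboundary (β : G → X → M) : G → G → X → M :=
  fun g h x => β g (h • x) + β h x - β (g * h) x

def IsCocycle (c : G → G → X → M) : Prop :=
  ∀ g h k x, c g h (k • x) + c (g * h) k x = c g (h * k) x + c h k x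

theorem coboundary_sub (β γ : G → X → M) :
    coboundary (β - γ) = coboundary β - coboundary γ := by
  funext g h x
  simp only [coboundary, Pi.sub_apply]
  abel

theorem coboundary_smul {R : Type*} [Monoid R] [DistribMulAction R M] (r : R) (β : G → X → M) :
    coboundary (r • β) = r • coboundary β := by
  funext g h x
  simp only [coboundary, Pi.smul_apply, smul_add, smul_sub]

theorem hat₂_coboundary (β : G → X → M) :
    hat₂ (coboundary β) = coboundary (hat₁ β) := by
  funext g h x
  simp only [hat₂, coboundary, hat₁, mul_inv_rev, smul_smul, inv_mul_cancel_left]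
  abel

theorem IsCocycle.eq_coboundary_average [Fintype G] [Module ℚ M] {c : G → G → X → M}
    (hc : IsCocycle c) :
    c = coboundary (fun g x => (Fintype.card G : ℚ)⁻¹ • ∑ k, c k g x) := by
  funext g h x
  have hsum : ∑ k, c k g (h • x) + ∑ k, c k h x =
      ∑ k, c k (g * h) x + Fintype.card G • c g h x := by
    rw [← Equiv.sum_comp (Equiv.mulRight g) (fun k => c k h x), ← Finset.sum_add_distrib]
    simp only [Equiv.coe_mulRight]
    rw [Finset.sum_congr rfl fun k _ => hc k g h x, Finset.sum_add_distrib, Finset.sum_const,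
      Finset.card_univ]
  have hG : (Fintype.card G : ℚ) ≠ 0 := Nat.cast_ne_zero.mpr Fintype.card_ne_zero
  simp only [coboundary, ← smul_add, ← smul_sub, hsum, add_sub_cancel_left,
    ← Nat.cast_smul_eq_nsmul ℚ, smul_smul, inv_mul_cancel₀ hG, one_smul]

theorem IsCocycle.exists_coboundary_hat₁_eq_neg [Fintype G] [Module ℚ M]
    {c : G → G → X → M} (hc : IsCocycle c) (hhat : hat₂ c = -c) :
    ∃ b : G → X → M, c = coboundary b ∧ hat₁ b = -b := by
  set β : G → X → M := fun g x => (Fintype.card G : ℚ)⁻¹ • ∑ k, c k g x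
  have hβ : c = coboundary β := hc.eq_coboundary_average
  refine ⟨(2 : ℚ)⁻¹ • (β - hat₁ β), ?_, ?_⟩
  · rw [coboundary_smul, coboundary_sub, ← hat₂_coboundary, ← hβ, hhat, sub_neg_eq_add,
      ← two_smul ℚ c, smul_smul, inv_mul_cancel₀ two_ne_zero, one_smul]
  · rw [hat₁_smul, hat₁_sub, hat₁_hat₁, ← smul_neg, neg_sub]

end ActionCochain

open ActionCochain in
/-- A strictly positive generalized 2-cocycle satisfying `Ω·Ω̂ = 1` is a coboundary
with a positive trivializer `χ` satisfying `χ·χ̂ = 1`. -/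
theorem positive_hat_cocycle_is_coboundary
    {G : Type*} [Group G] [Fintype G] {X : Type*} [MulAction G X]
    (Ω : G → G → X → ℝ)
    (hpos : ∀ (g h : G) (x : X), 0 < Ω g h x)
    (hΩ : ∀ (g h k : G) (x : X),
      Ω g h (k • x) * Ω (g * h) k x = Ω g (h * k) x * Ω h k x)
    (hhat : ∀ (g h : G) (x : X), Ω g h x * Ω h⁻¹ g⁻¹ ((g * h) • x) = 1) :
    ∃ χ : G → X → ℝ, (∀ (g : G) (x : X), 0 < χ g x) ∧
      (∀ (g h : G) (x : X), Ω g h x = χ g (h • x) * χ h x / χ (g * h) x) ∧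
      (∀ (g : G) (x : X), χ g x * χ g⁻¹ (g • x) = 1) := by
  have hlog_mul : ∀ g h x g' h' x', Real.log (Ω g h x * Ω g' h' x') =
      Real.log (Ω g h x) + Real.log (Ω g' h' x') := fun _ _ _ _ _ _ =>
    Real.log_mul (hpos _ _ _).ne' (hpos _ _ _).ne'
  set c : G → G → X → ℝ := fun g h x => Real.log (Ω g h x)
  have hc : IsCocycle c := fun g h k x => by
    simpa only [hlog_mul] using congrArg Real.log (hΩ g h k x)
  have hc_hat : hat₂ c = -c := by
    funext g h x
    have := congrArg Real.log (hhat g h x)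
    rw [hlog_mul, Real.log_one] at this
    exact eq_neg_of_add_eq_zero_right this
  obtain ⟨b, hcb, hb⟩ := hc.exists_coboundary_hat₁_eq_neg hc_hat
  refine ⟨fun g x => Real.exp (b g x), fun g x => Real.exp_pos _, fun g h x => ?_,
    fun g x => ?_⟩
  · rw [← Real.exp_add, ← Real.exp_sub, ← Real.exp_log (hpos g h x)]
    exact congrArg Real.exp (congrFun₃ hcb g h x)
  · have := congrFun₂ hb g x
    simp only [hat₁, Pi.neg_apply] at this
    rw [← Real.exp_add, this, add_neg_cancel, Real.exp_zero]
end

section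
/- Let G be a finite group and Ω : G × G → ℂˣ a 2-cocycle. Then Ω is cohomologous to a 2-cocycle taking values in the group μ_{|G|} of |G|-th roots of unity: there exists β : G → ℂˣ such that Ω'(g,h) := Ω(g,h)·β(g)β(h)/β(gh) satisfies Ω'(g,h)^{|G|} = 1 for all g,h ∈ G. -/
/-!
Multiplying the cocycle identity `Ω g h * Ω (g h) k = Ω g (h k) * Ω h k` over all `k ∈ G` and
reindexing `k ↦ h k` gives `Ω g h ^ |G| = f g * f h / f (g h)` with `f g = ∏ k, Ω g k`, so
`Ω ^ |G|` is a coboundary. Twisting `Ω` by `β` with `β g ^ |G| = (f g)⁻¹`, which exists because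
`ℂˣ` has all roots, kills this coboundary.
-/

open Finset

theorem IsAlgClosed.exists_units_pow_eq {K : Type*} [Field K] [IsAlgClosed K]
    (u : Kˣ) {n : ℕ} (hn : 0 < n) : ∃ v : Kˣ, v ^ n = u := by
  obtain ⟨z, hz⟩ := IsAlgClosed.exists_pow_nat_eq (u : K) hn
  have hz0 : z ≠ 0 := by
    rintro rfl
    exact u.ne_zero (hz ▸ zero_pow hn.ne')
  exact ⟨Units.mk0 z hz0, Units.ext (by simpa using hz)⟩

section Cocycle

variable {G M : Type*} [Group G] [Fintype G] {Ω : G → G → M}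

theorem cocycle_pow_card_mul_prod [CommMonoid M]
    (hΩ : ∀ g h k : G, Ω g h * Ω (g * h) k = Ω g (h * k) * Ω h k) (g h : G) :
    Ω g h ^ Fintype.card G * ∏ k, Ω (g * h) k = (∏ k, Ω g k) * ∏ k, Ω h k :=
  calc Ω g h ^ Fintype.card G * ∏ k, Ω (g * h) k = ∏ k, Ω g h * Ω (g * h) k := by
        rw [prod_mul_distrib, prod_const, card_univ]
    _ = ∏ k, Ω g (h * k) * Ω h k := prod_congr rfl fun k _ => hΩ g h k
    _ = (∏ k, Ω g k) * ∏ k, Ω h k := by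
        rw [prod_mul_distrib,
          Fintype.prod_equiv (Equiv.mulLeft h) (fun k => Ω g (h * k)) (Ω g) fun _ => rfl]

theorem exists_cohomologous_pow_card_eq_one [CommGroup M]
    (hroot : ∀ m : M, ∃ r : M, r ^ Fintype.card G = m)
    (hΩ : ∀ g h k : G, Ω g h * Ω (g * h) k = Ω g (h * k) * Ω h k) :
    ∃ β : G → M, ∀ g h : G, (Ω g h * β g * β h * (β (g * h))⁻¹) ^ Fintype.card G = 1 := by
  choose β hβ using fun g => hroot (∏ k, Ω g k)⁻¹
  refine ⟨β, fun g h => ?_⟩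
  calc (Ω g h * β g * β h * (β (g * h))⁻¹) ^ Fintype.card G
      = (Ω g h ^ Fintype.card G * ∏ k, Ω (g * h) k) * ((∏ k, Ω g k) * ∏ k, Ω h k)⁻¹ := by
        simp only [mul_pow, inv_pow, hβ, inv_inv, mul_inv]
        ac_rfl
    _ = 1 := by rw [cocycle_pow_card_mul_prod hΩ g h, mul_inv_cancel]

end Cocycle

/-- Any 2-cocycle on a finite group is cohomologous to one valued in the `|G|`-th
roots of unity. -/
theorem cocycle_cohomologous_to_roots_of_unity
    {G : Type*} [Group G] [Fintype G]
    (Ω : G → G → ℂˣ)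
    (hΩ : ∀ g h k : G, Ω g h * Ω (g * h) k = Ω g (h * k) * Ω h k) :
    ∃ β : G → ℂˣ, ∀ g h : G,
      (Ω g h * β g * β h * (β (g * h))⁻¹) ^ (Fintype.card G) = 1 :=
  exists_cohomologous_pow_card_eq_one
    (fun m => IsAlgClosed.exists_units_pow_eq m Fintype.card_pos) hΩ
end

section
/- Let G be a group and ω : G³ → ℂˣ a normalized 3-cocycle. Define Ξ(g,h) := ω(h⁻¹,g⁻¹,g)/ω(h⁻¹g⁻¹,g,h). Then for all g,h,k ∈ G: ω(k⁻¹,h⁻¹,g⁻¹) = ω(g,h,k) · Ξ(g,hk)·Ξ(h,k) / (Ξ(g,h)·Ξ(gh,k)). In compact notation, ω̂ = ω·dΞ, where ω̂(g,h,k) := ω(k⁻¹,h⁻¹,g⁻¹). -/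
/-!
Instantiate the 3-cocycle identity at `(k⁻¹, h⁻¹, g⁻¹, g)`, `(k⁻¹, h⁻¹g⁻¹, g, h)` and
`(k⁻¹h⁻¹g⁻¹, g, h, k)`. Normalization kills the term `ω(k⁻¹, h⁻¹, 1)` of the first one, and the
quotient of the second and third by the first is exactly `ω̂ = ω · dΞ`.
-/

namespace ThreeCocycle

variable {G A : Type*} [Group G] [CommGroup A]

def xi (ω : G → G → G → A) (g h : G) : A :=
  ω h⁻¹ g⁻¹ g / ω (h⁻¹ * g⁻¹) g h

/-- Coboundary of a 2-cochain with values in a trivial `G`-module. -/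
def coboundary (f : G → G → A) (g h k : G) : A :=
  f g (h * k) * f h k / (f g h * f (g * h) k)

theorem inv_rev_eq_mul_coboundary_xi (ω : G → G → G → A)
    (hω : ∀ g h k l : G,
      ω (g * h) k l * ω g h (k * l) = ω g h k * ω g (h * k) l * ω h k l)
    (hω₁ : ∀ g h : G, ω g h 1 = 1) (g h k : G) :
    ω k⁻¹ h⁻¹ g⁻¹ = ω g h k * coboundary (xi ω) g h k := by
  have e₁ := congrArg Additive.ofMul (hω k⁻¹ h⁻¹ g⁻¹ g)
  have e₂ := congrArg Additive.ofMul (hω k⁻¹ (h⁻¹ * g⁻¹) g h)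
  have e₃ := congrArg Additive.ofMul (hω (k⁻¹ * h⁻¹ * g⁻¹) g h k)
  apply Additive.ofMul.injective
  simp only [coboundary, xi, inv_mul_cancel, hω₁, mul_inv_rev, mul_assoc, mul_one, ofMul_mul,
    ofMul_div] at e₁ e₂ e₃ ⊢
  linear_combination (norm := abel) -e₁ + e₂ + e₃

end ThreeCocycle

open ThreeCocycle in
/-- First part of Lemma 7: for a normalized 3-cocycle `ω` and
`Ξ(g,h) = ω(h⁻¹,g⁻¹,g)/ω(h⁻¹g⁻¹,g,h)`, one has `ω̂ = ω · dΞ`, i.e.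
`ω(k⁻¹,h⁻¹,g⁻¹) = ω(g,h,k)·Ξ(g,hk)Ξ(h,k)/(Ξ(g,h)Ξ(gh,k))`. -/
theorem omega_hat_eq_omega_dXi
    {G : Type*} [Group G]
    (ω : G → G → G → ℂˣ)
    (hω : ∀ g h k l : G,
      ω (g * h) k l * ω g h (k * l) = ω g h k * ω g (h * k) l * ω h k l)
    (hnorm : ∀ g h : G, ω 1 g h = 1 ∧ ω g 1 h = 1 ∧ ω g h 1 = 1)
    (Ξ : G → G → ℂˣ)
    (hΞ : ∀ g h : G, Ξ g h = ω h⁻¹ g⁻¹ g / ω (h⁻¹ * g⁻¹) g h) :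
    ∀ g h k : G,
      ω k⁻¹ h⁻¹ g⁻¹ =
        ω g h k * (Ξ g (h * k) * Ξ h k) / (Ξ g h * Ξ (g * h) k) := by
  obtain rfl : Ξ = xi ω := funext₂ hΞ
  intro g h k
  rw [mul_div_assoc]
  exact inv_rev_eq_mul_coboundary_xi ω hω (fun g h => (hnorm g h).2.2) g h k
end

section
/- Let G be a group, H a complex Hilbert space, and suppose for every quadruple (a,b,c,d) ∈ G⁴ with ab = cd we are given an operator λ^{c,d}_{a,b} on H such that λ^{a,b}_{a,b} = 1 and λ^{f,g'}_{a,b} = λ^{f,g'}_{c,d} ∘ λ^{c,d}_{a,b} whenever ab = cd = fg'. Define, on H ⊗ ℂG ⊗ ℂG, the operator 𝒢_g := Σ_{a,b ∈ G} λ^{ag⁻¹, gb}_{a,b} ⊗ |ag⁻¹⟩⟨a| ⊗ |gb⟩⟨b|. Then g ↦ 𝒢_g is a group homomorphism: 𝒢_g ∘ 𝒢_h = 𝒢_{gh} for all g,h ∈ G, and 𝒢_e = 1. -/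
open scoped TensorProduct

/-- The matrix unit `|c⟩⟨a|` on the group algebra `ℂG = (G →₀ ℂ)`. -/
noncomputable def matrixUnit {G : Type*} (c a : G) :
    (G →₀ ℂ) →ₗ[ℂ] (G →₀ ℂ) :=
  (Finsupp.lsingle c).comp (Finsupp.lapply a)

/-- The Gauss-law operator
`𝒢_g = Σ_{a,b} λ^{ag⁻¹,gb}_{a,b} ⊗ |ag⁻¹⟩⟨a| ⊗ |gb⟩⟨b|` on `H ⊗ ℂG ⊗ ℂG`,
where `lam a b c d` denotes the transition operator `λ^{c,d}_{a,b}`. -/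
noncomputable def gaussOp {G : Type*} [Group G] [Fintype G]
    {H : Type*} [NormedAddCommGroup H] [InnerProductSpace ℂ H] [CompleteSpace H]
    (lam : G → G → G → G → H →ₗ[ℂ] H) (g : G) :
    (H ⊗[ℂ] ((G →₀ ℂ) ⊗[ℂ] (G →₀ ℂ))) →ₗ[ℂ]
      (H ⊗[ℂ] ((G →₀ ℂ) ⊗[ℂ] (G →₀ ℂ))) :=
  ∑ a : G, ∑ b : G,
    TensorProduct.map (lam a b (a * g⁻¹) (g * b))
      (TensorProduct.map (matrixUnit (a * g⁻¹) a) (matrixUnit (g * b) b))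

section MatrixUnit

variable {G : Type*}

lemma matrixUnit_single_self (c a : G) (r : ℂ) :
    matrixUnit c a (Finsupp.single a r) = Finsupp.single c r := by
  simp [matrixUnit]

lemma matrixUnit_single_of_ne {a b : G} (c : G) (r : ℂ) (h : a ≠ b) :
    matrixUnit c a (Finsupp.single b r) = 0 := by
  simp [matrixUnit, h.symm]

end MatrixUnit

section GaussOp

variable {G : Type*} [Group G] [Fintype G]
  {H : Type*} [NormedAddCommGroup H] [InnerProductSpace ℂ H] [CompleteSpace H]
  (lam : G → G → G → G → H →ₗ[ℂ] H)

lemma gaussOp_tmul_single (g : G) (x : H) (p q : G) :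
    gaussOp lam g (x ⊗ₜ (Finsupp.single p 1 ⊗ₜ Finsupp.single q 1)) =
      lam p q (p * g⁻¹) (g * q) x ⊗ₜ
        (Finsupp.single (p * g⁻¹) 1 ⊗ₜ Finsupp.single (g * q) 1) := by
  simp only [gaussOp, LinearMap.sum_apply, TensorProduct.map_tmul]
  rw [Finset.sum_eq_single p, Finset.sum_eq_single q]
  · simp only [matrixUnit_single_self]
  · intro b _ hb
    simp [matrixUnit_single_of_ne _ _ hb]
  · simp
  · intro a _ ha
    simp [matrixUnit_single_of_ne _ _ ha]
  · simp

lemma gaussOp_comp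
    (hcomp : ∀ a b c d f g' : G, a * b = c * d → c * d = f * g' →
      lam a b f g' = (lam c d f g') ∘ₗ (lam a b c d))
    (g h : G) :
    gaussOp lam g ∘ₗ gaussOp lam h = gaussOp lam (g * h) := by
  -- Both sides send the basis vector at `(p, q)` to the one at `(p (gh)⁻¹, g h q)`; the `λ`
  -- factors agree by the composition law through the intermediate pair `(p h⁻¹, h q)`.
  ext x p q
  simp only [TensorProduct.AlgebraTensorModule.curry_apply, TensorProduct.curry_apply,
    LinearMap.coe_restrictScalars, LinearMap.comp_apply, Finsupp.lsingle_apply,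
    gaussOp_tmul_single, mul_inv_rev, ← mul_assoc]
  rw [hcomp p q (p * h⁻¹) (h * q) (p * h⁻¹ * g⁻¹) (g * h * q) (by group) (by group),
    LinearMap.comp_apply]

lemma gaussOp_one (hid : ∀ a b : G, lam a b a b = LinearMap.id) :
    gaussOp lam 1 = LinearMap.id := by
  ext x p q
  simp [gaussOp_tmul_single, hid]

end GaussOp

/-- If the transition operators `λ^{c,d}_{a,b}` (defined for `ab = cd`) satisfy
`λ^{a,b}_{a,b} = 1` and the composition law
`λ^{f,g'}_{a,b} = λ^{f,g'}_{c,d} ∘ λ^{c,d}_{a,b}` whenever `ab = cd = fg'`, then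
`g ↦ 𝒢_g` is a group homomorphism. -/
theorem gaussOp_homomorphism {G : Type*} [Group G] [Fintype G]
    {H : Type*} [NormedAddCommGroup H] [InnerProductSpace ℂ H] [CompleteSpace H]
    (lam : G → G → G → G → H →ₗ[ℂ] H)
    (hid : ∀ a b : G, lam a b a b = LinearMap.id)
    (hcomp : ∀ a b c d f g' : G, a * b = c * d → c * d = f * g' →
      lam a b f g' = (lam c d f g') ∘ₗ (lam a b c d)) :
    (∀ g h : G, (gaussOp lam g) ∘ₗ (gaussOp lam h) = gaussOp lam (g * h)) ∧
      gaussOp lam (1 : G) = LinearMap.id :=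
  ⟨gaussOp_comp lam hcomp, gaussOp_one lam hid⟩
end

section
/- Let G be a group acting on a set X, let x₀ ∈ X with stabilizer H = {g ∈ G : g·x₀ = x₀}, and fix coset representatives k_x ∈ G with k_x·x₀ = x and k_{x₀} = e. Let ψ : H × H → ℂˣ be a function, β : G × G → ℂˣ a 2-cocycle on G, and γ : G × X → ℂˣ such that for all g₁,g₂ ∈ G and x ∈ X, ψ(k⁻¹_{g₁g₂x}·g₁·k_{g₁x}, k⁻¹_{g₂x}·g₂·k_x) = β(g₁,g₂) · γ(g₁g₂, x) / (γ(g₁, g₂x)·γ(g₂, x)). Then Ψ : G × G → ℂˣ defined by Ψ(g₁,g₂) := β(g₁,g₂)·γ(g₁g₂, x₀)/(γ(g₁,x₀)·γ(g₂,x₀)) is a 2-cocycle on G whose restriction to H × H equals ψ; in particular ψ is a 2-cocycle on H that extends to G. -/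
/-!
Ψ is β multiplied by the coboundary of `g ↦ γ(g, x₀)`, so it is a 2-cocycle on `G` because β is.
For `h₁, h₂` in the stabilizer of `x₀` the coset representatives in the gauge identity at
`x = x₀` are all `k_{x₀} = 1`, so that identity reads `ψ(h₁, h₂) = Ψ(h₁, h₂)`; the cocycle
identity of Ψ then restricts to one for ψ on the stabilizer.
-/

section TwoCocycle

variable {G M : Type*} [CommGroup M]

/-- Trivial action of `G` on `M`, unlike `IsMulCocycle₂`. -/
def IsTwoCocycle [Mul G] (c : G → G → M) : Prop :=
  ∀ g h l : G, c g h * c (g * h) l = c g (h * l) * c h l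

theorem IsTwoCocycle.mul [Mul G] {c d : G → G → M} (hc : IsTwoCocycle c)
    (hd : IsTwoCocycle d) : IsTwoCocycle (c * d) := fun g h l => by
  simp only [Pi.mul_apply]
  rw [mul_mul_mul_comm, hc, hd, mul_mul_mul_comm]

def twoCoboundary [Mul G] (f : G → M) : G → G → M := fun g h => f (g * h) / (f g * f h)

theorem isTwoCocycle_twoCoboundary [Semigroup G] (f : G → M) :
    IsTwoCocycle (twoCoboundary f) := fun g h l => by
  simp only [twoCoboundary, mul_assoc g h l]
  apply Additive.ofMul.injective
  simp only [ofMul_mul, ofMul_div]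
  abel

theorem IsTwoCocycle.cocycle_identity_of_eqOn [Mul G] {c ψ : G → G → M} (hc : IsTwoCocycle c)
    {S : Subsemigroup G} (hcψ : ∀ a b, a ∈ S → b ∈ S → c a b = ψ a b) :
    ∀ a b d, a ∈ S → b ∈ S → d ∈ S → ψ a b * ψ (a * b) d = ψ a (b * d) * ψ b d := by
  intro a b d ha hb hd
  rw [← hcψ a b ha hb, ← hcψ _ d (S.mul_mem ha hb) hd, ← hcψ a _ ha (S.mul_mem hb hd),
    ← hcψ b d hb hd]
  exact hc a b d

end TwoCocycle

theorem psi_extends_to_G_general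
    {G : Type*} [Group G] {X : Type*} [MulAction G X]
    (x₀ : X) (k : X → G)
    (hk₀ : k x₀ = 1)
    (ψ : G → G → ℂˣ) (β : G → G → ℂˣ) (γ : G → X → ℂˣ)
    (hβ : ∀ g h l : G, β g h * β (g * h) l = β g (h * l) * β h l)
    (hmain : ∀ (g₁ g₂ : G) (x : X),
      ψ ((k (g₁ • g₂ • x))⁻¹ * g₁ * k (g₁ • x)) ((k (g₂ • x))⁻¹ * g₂ * k x) =
        β g₁ g₂ * γ (g₁ * g₂) x / (γ g₁ (g₂ • x) * γ g₂ x))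
    (Ψ : G → G → ℂˣ)
    (hΨ : ∀ g₁ g₂ : G, Ψ g₁ g₂ = β g₁ g₂ * γ (g₁ * g₂) x₀ / (γ g₁ x₀ * γ g₂ x₀)) :
    (∀ g h l : G, Ψ g h * Ψ (g * h) l = Ψ g (h * l) * Ψ h l) ∧
    (∀ h₁ h₂ : G, h₁ ∈ MulAction.stabilizer G x₀ → h₂ ∈ MulAction.stabilizer G x₀ →
      Ψ h₁ h₂ = ψ h₁ h₂) ∧
    (∀ h₁ h₂ h₃ : G, h₁ ∈ MulAction.stabilizer G x₀ →
      h₂ ∈ MulAction.stabilizer G x₀ → h₃ ∈ MulAction.stabilizer G x₀ →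
      ψ h₁ h₂ * ψ (h₁ * h₂) h₃ = ψ h₁ (h₂ * h₃) * ψ h₂ h₃) := by
  have hΨ_cocycle : IsTwoCocycle Ψ := by
    have hΨ_eq : Ψ = β * twoCoboundary fun g => γ g x₀ :=
      funext₂ fun g h => (hΨ g h).trans (mul_div_assoc _ _ _)
    exact hΨ_eq ▸ IsTwoCocycle.mul hβ (isTwoCocycle_twoCoboundary _)
  have hΨψ : ∀ h₁ h₂ : G, h₁ ∈ MulAction.stabilizer G x₀ → h₂ ∈ MulAction.stabilizer G x₀ →
      Ψ h₁ h₂ = ψ h₁ h₂ := by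
    intro h₁ h₂ (hh₁ : h₁ • x₀ = x₀) (hh₂ : h₂ • x₀ = x₀)
    have hgauge := hmain h₁ h₂ x₀
    simp only [hh₂, hh₁, hk₀, inv_one, one_mul, mul_one] at hgauge
    rw [hΨ, hgauge]
  exact ⟨hΨ_cocycle, hΨψ,
    hΨ_cocycle.cocycle_identity_of_eqOn (S := (MulAction.stabilizer G x₀).toSubmonoid.toSubsemigroup) hΨψ⟩

/-- Converse direction of Proposition 13: if the L-symbols labeled by `(H,ψ)` are
trivializable by a gauge `(β,γ)` (block independence), then
`Ψ(g₁,g₂) = β(g₁,g₂)·γ(g₁g₂,x₀)/(γ(g₁,x₀)γ(g₂,x₀))` is a 2-cocycle on `G` whose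
restriction to the stabilizer `H` of `x₀` equals `ψ`; in particular `ψ` is a
2-cocycle on `H` that extends to `G`. -/
theorem psi_extends_to_G
    {G : Type*} [Group G] {X : Type*} [MulAction G X]
    (x₀ : X) (k : X → G)
    (hk : ∀ x : X, k x • x₀ = x) (hk₀ : k x₀ = 1)
    (ψ : G → G → ℂˣ) (β : G → G → ℂˣ) (γ : G → X → ℂˣ)
    (hβ : ∀ g h l : G, β g h * β (g * h) l = β g (h * l) * β h l)
    (hmain : ∀ (g₁ g₂ : G) (x : X),
      ψ ((k (g₁ • g₂ • x))⁻¹ * g₁ * k (g₁ • x)) ((k (g₂ • x))⁻¹ * g₂ * k x) =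
        β g₁ g₂ * γ (g₁ * g₂) x / (γ g₁ (g₂ • x) * γ g₂ x))
    (Ψ : G → G → ℂˣ)
    (hΨ : ∀ g₁ g₂ : G, Ψ g₁ g₂ = β g₁ g₂ * γ (g₁ * g₂) x₀ / (γ g₁ x₀ * γ g₂ x₀)) :
    (∀ g h l : G, Ψ g h * Ψ (g * h) l = Ψ g (h * l) * Ψ h l) ∧
    (∀ h₁ h₂ : G, h₁ ∈ MulAction.stabilizer G x₀ → h₂ ∈ MulAction.stabilizer G x₀ →
      Ψ h₁ h₂ = ψ h₁ h₂) ∧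
    (∀ h₁ h₂ h₃ : G, h₁ ∈ MulAction.stabilizer G x₀ →
      h₂ ∈ MulAction.stabilizer G x₀ → h₃ ∈ MulAction.stabilizer G x₀ →
      ψ h₁ h₂ * ψ (h₁ * h₂) h₃ = ψ h₁ (h₂ * h₃) * ψ h₂ h₃) :=
  psi_extends_to_G_general x₀ k hk₀ ψ β γ hβ hmain Ψ hΨ
end
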